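/- arXiv:1910.12321 — 2 statements merged into one kernel-verified Lean document; each statement's English description precedes it below -/
import Mathlib

section
/- Let l be a prime and let ζ be a primitive l-th root of unity in ℂ. If a₁, …, a_m are l-th roots of unity (each a power of ζ) with Σ aᵢ = (m − 1) + ζ, then exactly one aᵢ equals ζ and all the others equal 1. -/
/-!
Write `aᵢ = ζ^{eᵢ}` with `eᵢ < l` and consider `P = ∑ᵢ (X^{eᵢ} - 1) - (X - 1) ∈ ℚ[X]`. It has degree
`< l`, vanishes at `ζ` by hypothesis and vanishes at `1`. Since the minimal polynomial of `ζ` is the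
cyclotomic polynomial `Φ_l` of degree `l - 1`, `P` is a rational multiple of `Φ_l`, and `Φ_l(1) = l`
forces `P = 0`. Evaluating `P = 0` at `0` shows that exactly one `eᵢ` is nonzero.
-/

open Polynomial Finset

theorem IsPrimitiveRoot.eq_zero_of_aeval_eq_zero_of_eval_one_eq_zero {K : Type*} [Field K]
    [CharZero K] {l : ℕ} (hl : l.Prime) {ζ : K} (hζ : IsPrimitiveRoot ζ l) {p : ℚ[X]}
    (hdeg : p.natDegree < l) (hζp : aeval ζ p = 0) (h1 : p.eval 1 = 0) : p = 0 := by
  have := Fact.mk hl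
  have hdvd : cyclotomic l ℚ ∣ p := by
    rw [cyclotomic_eq_minpoly_rat hζ hl.pos]
    exact minpoly.dvd ℚ ζ hζp
  have hp : p = C p.leadingCoeff * cyclotomic l ℚ := by
    refine eq_leadingCoeff_mul_of_monic_of_dvd_of_natDegree_le (cyclotomic.monic l ℚ) hdvd ?_
    rw [natDegree_cyclotomic, Nat.totient_prime hl]
    omega
  have hlc : p.leadingCoeff * l = 0 := by
    simpa [h1, eval_one_cyclotomic_prime] using (congrArg (eval 1) hp).symm
  exact leadingCoeff_eq_zero.mp ((mul_eq_zero.mp hlc).resolve_right (mod_cast hl.ne_zero))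

theorem card_filter_ne_zero_eq_one_of_sum_X_pow_sub_one_eq {R ι : Type*} [CommRing R]
    [CharZero R] [Fintype ι] [DecidableEq ι] {e : ι → ℕ}
    (h : ∑ i, (X ^ e i - 1 : R[X]) = X - 1) : #{i | e i ≠ 0} = 1 := by
  have h0 := congrArg (eval 0) h
  have hterm : ∀ i, (0 : R) ^ e i - 1 = -(if e i ≠ 0 then 1 else 0) := by
    intro i
    rw [zero_pow_eq]
    split_ifs <;> simp_all
  simp only [eval_sub, eval_finsetSum, eval_pow, eval_X, eval_one, hterm, sum_neg_distrib,
    sum_boole] at h0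
  exact Nat.cast_eq_one.mp (by linear_combination -h0)

theorem IsPrimitiveRoot.card_filter_exponent_ne_zero_eq_one {K ι : Type*} [Field K] [CharZero K]
    [Fintype ι] [DecidableEq ι] {l : ℕ} (hl : l.Prime) {ζ : K} (hζ : IsPrimitiveRoot ζ l)
    {e : ι → ℕ} (he : ∀ i, e i < l) (h : ∑ i, (ζ ^ e i - 1) = ζ - 1) :
    #{i | e i ≠ 0} = 1 := by
  set P : ℚ[X] := ∑ i, (X ^ e i - 1) - (X - 1)
  have hdeg : P.natDegree < l := by
    refine (natDegree_sub_le _ _).trans_lt (max_lt ?_ ?_)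
    · refine (natDegree_sum_le_of_forall_le _ _ (n := l - 1) fun i _ => ?_).trans_lt
        (Nat.sub_lt hl.pos one_pos)
      rw [← C_1, natDegree_X_pow_sub_C]
      exact Nat.le_sub_one_of_lt (he i)
    · rw [← C_1, natDegree_X_sub_C]
      exact hl.one_lt
  have hP : P = 0 := by
    refine hζ.eq_zero_of_aeval_eq_zero_of_eval_one_eq_zero hl hdeg ?_ ?_
    · simp only [P, map_sub, map_sum, map_pow, aeval_X, map_one, h, sub_self]
    · simp only [P, eval_sub, eval_finsetSum, eval_pow, eval_X, eval_one, one_pow, sub_self,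
        sum_const_zero]
  exact card_filter_ne_zero_eq_one_of_sum_X_pow_sub_one_eq (sub_eq_zero.mp hP)

/-- If `l` is prime, `ζ` a primitive `l`-th root of unity in `ℂ`, and `a₁, …, a_m` are
powers of `ζ` with `∑ aᵢ = (m − 1) + ζ`, then exactly one `aᵢ` equals `ζ` and all the
others equal `1`. -/
theorem roots_of_unity_sum_eq (l : ℕ) (hl : l.Prime) (ζ : ℂ) (hζ : IsPrimitiveRoot ζ l)
    (m : ℕ) (a : Fin m → ℂ) (ha : ∀ i, ∃ k : ℕ, a i = ζ ^ k)
    (hsum : ∑ i, a i = ((m : ℂ) - 1) + ζ) :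
    ∃! i, a i = ζ ∧ ∀ j, j ≠ i → a j = 1 := by
  have : NeZero l := ⟨hl.ne_zero⟩
  have hsum' : ∑ i, (a i - 1) = ζ - 1 := by
    rw [sum_sub_distrib, hsum, sum_const, card_fin, nsmul_one]
    ring
  choose e he_lt he using fun i => hζ.eq_pow_of_pow_eq_one (ξ := a i) (by
    obtain ⟨k, hk⟩ := ha i
    rw [hk, pow_right_comm, hζ.pow_eq_one, one_pow])
  obtain ⟨i, hi⟩ := card_eq_one.mp
    (hζ.card_filter_exponent_ne_zero_eq_one hl he_lt (by simpa only [he] using hsum'))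
  have hothers : ∀ j, j ≠ i → a j = 1 := by
    intro j hj
    have hej : e j = 0 := by
      by_contra hne
      exact hj (mem_singleton.mp (hi ▸ mem_filter.mpr ⟨mem_univ j, hne⟩))
    rw [← he, hej, pow_zero]
  have hai : a i = ζ := by
    rw [sum_eq_single i (fun j _ hj => sub_eq_zero.mpr (hothers j hj)) (by simp)] at hsum'
    exact sub_left_injective hsum'
  refine ⟨i, ⟨hai, hothers⟩, fun j ⟨hj, _⟩ => ?_⟩
  by_contra hji
  exact hζ.ne_one hl.one_lt (hj ▸ hothers j hji)
end

section
/- Pigeonhole/finite-intersection lemma: Let l be a prime and m < l a positive integer. Let Q be a finite set with |Q| ≤ m. Let A, B be abelian groups of exponent l, ψ : A → B a group homomorphism, ev_𝔭 : A → μ_l a group homomorphism, and for each q ∈ Q a group homomorphism ev_q : B → μ_l together with a positive integer f_q. Define φ(χ) = { q ∈ Q : ev_q(ψ(χ)) = ev_𝔭(χ)^{f_q} }. Suppose φ(χ) is nonempty for every χ ∈ A. Then ⋂_{χ ∈ A} φ(χ) is nonempty, provided A is finitely generated. More precisely: for any χ₁, …, χ_n ∈ A, the intersection φ(χ₁) ∩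 ⋯ ∩ φ(χ_n) is nonempty. -/
/-!
For each `q`, the `χ` with `q ∈ φ(χ)` form the subgroup of `A` on which the homomorphisms
`ev_q ∘ ψ` and `ev𝔭 ^ f_q` agree, so the hypothesis says that fewer than `l` subgroups cover
the group `A` of exponent `l`. Such a cover contains `A` itself. Given `a` and `b`, the `l`
elements `a ^ j * b` (`j < l`) are covered, so by pigeonhole two of them, `a ^ j * b` and
`a ^ k * b`, lie in a common member `H`; then `a ^ (k - j) ∈ H`, hence `a ∈ H` because
`0 < k - j < l` is prime to `l`, and `b ∈ H`. Induction on a finite set of elements shows that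
each finite set lies in one member, and applying this to one non-member of each proper member
shows that some member is `A`.
-/

namespace Subgroup

variable {G : Type*} [Group G] {l : ℕ}

theorem mem_of_pow_mem_of_pos_of_lt (hl : l.Prime) {H : Subgroup G} {g : G} (hg : g ^ l = 1)
    {d : ℕ} (hd : 0 < d) (hdl : d < l) (h : g ^ d ∈ H) : g ∈ H := by
  have hdl' : d.Coprime l := ((hl.coprime_iff_not_dvd).2 (Nat.not_dvd_of_pos_of_lt hd hdl)).symm
  obtain ⟨n, hn⟩ := exists_pow_eq_self_of_coprime
    (hdl'.coprime_dvd_right (orderOf_dvd_of_pow_eq_one hg))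
  exact hn ▸ pow_mem h n

theorem mem_of_pow_mul_mem_of_pow_mul_mem (hl : l.Prime) {H : Subgroup G} {a b : G}
    (ha : a ^ l = 1) {j k : ℕ} (hjk : j < k) (hkl : k < l)
    (hj : a ^ j * b ∈ H) (hk : a ^ k * b ∈ H) : a ∈ H ∧ b ∈ H := by
  have hdiff : a ^ (k - j) ∈ H := by
    have := H.mul_mem hk (H.inv_mem hj)
    rwa [mul_inv_rev, mul_assoc, mul_inv_cancel_left, ← pow_sub _ hjk.le] at this
  have haH : a ∈ H := mem_of_pow_mem_of_pos_of_lt hl ha (Nat.sub_pos_of_lt hjk)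
    ((Nat.sub_le k j).trans_lt hkl) hdiff
  refine ⟨haH, ?_⟩
  simpa using H.mul_mem (H.pow_mem (H.inv_mem haH) j) hj

variable {ι : Type*} [Finite ι] (hl : l.Prime) (hG : ∀ g : G, g ^ l = 1)
  (hι : Nat.card ι < l) {H : ι → Subgroup G} (hcover : ∀ g, ∃ i, g ∈ H i)
include hl hG hι hcover

theorem exists_subset_of_forall_exists_mem (s : Finset G) : ∃ i, (s : Set G) ⊆ H i := by
  classical
  suffices ∀ b, ∃ i, b ∈ H i ∧ (s : Set G) ⊆ H i from
    (this 1).imp fun _ ↦ And.right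
  induction s using Finset.induction_on with
  | empty => simpa using hcover
  | insert a s _ ih =>
    intro b
    choose i hi using fun j : Fin l ↦ ih (a ^ (j : ℕ) * b)
    have := Fintype.ofFinite ι
    obtain ⟨j, k, hne, hjk⟩ := Fintype.exists_ne_map_eq_of_card_lt i
      (by rwa [Fintype.card_fin, ← Nat.card_eq_fintype_card])
    wlog hlt : j < k generalizing j k
    · exact this k j hne.symm hjk.symm ((lt_or_gt_of_ne hne).resolve_left hlt)
    obtain ⟨haH, hbH⟩ := mem_of_pow_mul_mem_of_pow_mul_mem hl (hG a) hlt k.isLt (hi j).1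
      (hjk ▸ (hi k).1)
    exact ⟨i j, hbH, by simpa [Set.insert_subset_iff] using ⟨haH, (hi j).2⟩⟩

theorem exists_eq_top_of_forall_exists_mem : ∃ i, H i = ⊤ := by
  classical
  by_contra! hproper
  choose g hg using fun i ↦ by simpa [eq_top_iff'] using hproper i
  have := Fintype.ofFinite ι
  obtain ⟨i, hi⟩ := exists_subset_of_forall_exists_mem hl hG hι hcover (Finset.univ.image g)
  exact hg i (hi (by simp))

end Subgroup

theorem finite_intersection_of_eval_sets_general (l m : ℕ) (hl : l.Prime) (hml : m < l)
    {Q : Type*} [Finite Q] (hQ : Nat.card Q ≤ m)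
    {A B : Type*} [CommGroup A] [CommGroup B]
    (hA : ∀ a : A, a ^ l = 1)
    (ψ : A →* B) (evp : A →* ℂˣ) (ev : Q → B →* ℂˣ)
    (f : Q → ℕ)
    (hne : ∀ χ : A, ∃ q : Q, ev q (ψ χ) = evp χ ^ f q) :
    (∀ (n : ℕ) (χ : Fin n → A), ∃ q : Q, ∀ i, ev q (ψ (χ i)) = evp (χ i) ^ f q) ∧
    (Group.FG A → ∃ q : Q, ∀ χ : A, ev q (ψ χ) = evp χ ^ f q) := by
  let H (q : Q) : Subgroup A := ((ev q).comp ψ).eqLocus ((powMonoidHom (f q)).comp evp)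
  obtain ⟨q, hq⟩ : ∃ q, H q = ⊤ :=
    Subgroup.exists_eq_top_of_forall_exists_mem hl hA (hQ.trans_lt hml) hne
  have hmem (χ : A) : ev q (ψ χ) = evp χ ^ f q := (Subgroup.eq_top_iff' _).1 hq χ
  exact ⟨fun _ χ ↦ ⟨q, fun i ↦ hmem (χ i)⟩, fun _ ↦ ⟨q, hmem⟩⟩

/-- Pigeonhole / finite-intersection lemma (Lemma 2.7): `l` prime, `m < l`, `Q` a finite
set with `|Q| ≤ m`, `A, B` abelian groups of exponent `l`, `ψ : A → B`, `ev𝔭 : A → μ_l`,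
and for each `q ∈ Q` an evaluation `ev_q : B → μ_l` and a positive integer `f_q`. With
`φ(χ) = {q : ev_q(ψ(χ)) = ev𝔭(χ)^{f_q}}`, if `φ(χ) ≠ ∅` for all `χ`, then every finite
intersection `φ(χ₁) ∩ ⋯ ∩ φ(χ_n)` is nonempty, and (provided `A` is finitely generated)
`⋂_{χ ∈ A} φ(χ)` is nonempty. -/
theorem finite_intersection_of_eval_sets (l m : ℕ) (hl : l.Prime) (hm : 0 < m) (hml : m < l)
    {Q : Type*} [Finite Q] (hQ : Nat.card Q ≤ m)
    {A B : Type*} [CommGroup A] [CommGroup B]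
    (hA : ∀ a : A, a ^ l = 1) (hB : ∀ b : B, b ^ l = 1)
    (ψ : A →* B) (evp : A →* ℂˣ) (ev : Q → B →* ℂˣ)
    (hevp : ∀ a : A, evp a ^ l = 1) (hev : ∀ q (b : B), ev q b ^ l = 1)
    (f : Q → ℕ) (hf : ∀ q, 0 < f q)
    (hne : ∀ χ : A, ∃ q : Q, ev q (ψ χ) = evp χ ^ f q) :
    (∀ (n : ℕ) (χ : Fin n → A), ∃ q : Q, ∀ i, ev q (ψ (χ i)) = evp (χ i) ^ f q) ∧
    (Group.FG A → ∃ q : Q, ∀ χ : A, ev q (ψ χ) = evp χ ^ f q) :=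
  finite_intersection_of_eval_sets_general l m hl hml hQ hA ψ evp ev f hne
end
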